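/- Let N ≥ 3, let B₀ > 0 and B₁,…,B_N ∈ ℝ, and define f(x) = (Σ_{k=1}^N B_k x_k) e^{−B₀|x|²} on ℝ^N. Then ∫_{S^{N-1}} f(rσ) dσ = 0 for all r > 0, and equality holds: ∫_{ℝ^N}|∇f|² dx · ∫_{ℝ^N} f²|x|² dx = ((N+2)/2)² · (∫_{ℝ^N} f² dx)². -/

import Mathlib

/-!
With `b = (B₁, …, B_N)`, `f x = ⟪b, x⟫ e^{-B₀‖x‖²}` is odd and the sphere measure is invariant
under `x ↦ -x`, so the spherical means of `f` vanish.

For the equality put `a = 2B₀`. Gaussian integration by parts,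
`∫ ⟪v, x⟫ φ e^{-a‖x‖²} = (2a)⁻¹ ∫ ∂ᵥφ e^{-a‖x‖²}`, gives
`∫ ⟪b, x⟫² e^{-a‖x‖²} = ‖b‖²/(2a) ∫ e^{-a‖x‖²}` and `∫ ‖x‖² e^{-a‖x‖²} = N/(2a) ∫ e^{-a‖x‖²}`,
hence `∫ f² ‖x‖² = (N+2)/(2a) ∫ f²`. Since
`|∇f|² = (‖b‖² - 2a⟪b, x⟫² + a²⟪b, x⟫²‖x‖²) e^{-a‖x‖²}`, the first two terms cancel after
integration and `∫ |∇f|² = B₀ (N+2) ∫ f²`.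
-/

open MeasureTheory Metric Filter

noncomputable section

/-- `|∇f|² = Σ_k (∂f/∂x_k)²` for a scalar field on `ℝ^N`. -/
def gradSqS {N : ℕ} (f : EuclideanSpace ℝ (Fin N) → ℝ)
    (x : EuclideanSpace ℝ (Fin N)) : ℝ :=
  ∑ k, (fderiv ℝ f x (EuclideanSpace.single k 1)) ^ 2

/-- The standard surface measure on the unit sphere `S^{N-1} ⊂ ℝ^N`. -/
def sphereMeasure (N : ℕ) : Measure (sphere (0 : EuclideanSpace ℝ (Fin N)) 1) :=
  (volume : Measure (EuclideanSpace ℝ (Fin N))).toSphere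

open Real Module
open scoped RealInnerProductSpace

namespace MeasureTheory.Measure

variable {E : Type*} [NormedAddCommGroup E] [NormedSpace ℝ E] [MeasurableSpace E] [BorelSpace E]

instance toSphere.isNegInvariant (μ : Measure E) [μ.IsNegInvariant] :
    μ.toSphere.IsNegInvariant := by
  refine ⟨ext fun s hs => ?_⟩
  rw [neg_apply, toSphere_apply' _ hs.neg, toSphere_apply' _ hs,
    Set.image_neg_of_apply_neg_eq_neg fun x _ => coe_neg_sphere x, Set.smul_neg, measure_neg]

end MeasureTheory.Measure

theorem integral_eq_zero_of_odd {G F : Type*} [MeasurableSpace G] [InvolutiveNeg G]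
    [MeasurableNeg G] [NormedAddCommGroup F] [NormedSpace ℝ F] (μ : Measure G) [μ.IsNegInvariant]
    {g : G → F} (hg : ∀ x, g (-x) = -g x) : ∫ x, g x ∂μ = 0 := by
  have h := (Measure.measurePreserving_neg μ).integral_comp
    (MeasurableEquiv.neg G).measurableEmbedding g
  simp only [hg, integral_neg] at h
  rw [neg_eq_iff_add_eq_zero, ← two_smul ℝ, smul_eq_zero] at h
  exact h.resolve_left two_ne_zero

theorem sq_exp_neg_mul (c t : ℝ) : exp (-c * t) ^ 2 = exp (-(2 * c) * t) := by
  rw [sq, ← exp_add]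
  ring_nf

section GaussianMoments

variable {E : Type*} [NormedAddCommGroup E] [InnerProductSpace ℝ E]

theorem hasFDerivAt_exp_neg_mul_sq_norm (a : ℝ) (x : E) :
    HasFDerivAt (fun x : E => exp (-a * ‖x‖ ^ 2))
      ((-2 * a * exp (-a * ‖x‖ ^ 2)) • innerSL ℝ x) x := by
  convert ((hasStrictFDerivAt_norm_sq x).hasFDerivAt.const_mul (-a)).exp using 1
  ext v
  simp only [FunLike.coe_smul, Pi.smul_apply, smul_eq_mul]
  ring

theorem hasFDerivAt_inner_mul_exp_neg_mul_sq_norm (c : ℝ) (u x : E) :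
    HasFDerivAt (fun x : E => ⟪u, x⟫ * exp (-c * ‖x‖ ^ 2))
      (innerSL ℝ (exp (-c * ‖x‖ ^ 2) • (u - (2 * c * ⟪u, x⟫) • x))) x := by
  have h : HasFDerivAt (fun x : E => ⟪u, x⟫ * exp (-c * ‖x‖ ^ 2))
      (⟪u, x⟫ • (-2 * c * exp (-c * ‖x‖ ^ 2)) • innerSL ℝ x +
        exp (-c * ‖x‖ ^ 2) • innerSL ℝ u) x :=
    (innerSL ℝ u).hasFDerivAt.mul (hasFDerivAt_exp_neg_mul_sq_norm c x)
  refine h.congr_fderiv (ContinuousLinearMap.ext fun v => ?_)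
  simp only [real_inner_comm x, add_apply, smul_apply, coe_innerSL_apply, smul_eq_mul, map_smul,
    map_sub, sub_apply]
  ring

variable [FiniteDimensional ℝ E] [MeasurableSpace E] [BorelSpace E] (μ : Measure E)
  [μ.IsAddHaarMeasure]

theorem integrable_norm_pow_mul_exp_neg_mul_sq_norm [Nontrivial E] {a : ℝ} (ha : 0 < a) (n : ℕ) :
    Integrable (fun x : E => ‖x‖ ^ n * exp (-a * ‖x‖ ^ 2)) μ := by
  rw [integrable_fun_norm_addHaar μ (f := fun t => t ^ n * exp (-a * t ^ 2))]
  refine (integrableOn_rpow_mul_exp_neg_mul_sq ha (s := (finrank ℝ E - 1 + n : ℕ))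
    (neg_one_lt_zero.trans_le (Nat.cast_nonneg _))).congr_fun (fun t _ => ?_) measurableSet_Ioi
  simp only [rpow_natCast, pow_add, smul_eq_mul]
  ring

theorem integrable_of_abs_le_norm_pow_mul_exp_neg_mul_sq_norm [Nontrivial E] {a : ℝ} (ha : 0 < a)
    {g : E → ℝ} (hg : Continuous g) (C : ℝ) (n : ℕ)
    (hbound : ∀ x, |g x| ≤ C * (‖x‖ ^ n * exp (-a * ‖x‖ ^ 2))) : Integrable g μ :=
  ((integrable_norm_pow_mul_exp_neg_mul_sq_norm μ ha n).const_mul C).mono'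
    hg.aestronglyMeasurable (.of_forall hbound)

/-- Gaussian integration by parts, from `∂ᵥ exp (-a‖x‖²) = -2a ⟪v, x⟫ exp (-a‖x‖²)`. -/
theorem integral_inner_mul_mul_exp_neg_mul_sq_norm {a : ℝ} (ha : a ≠ 0) {φ : E → ℝ}
    (hφ : Differentiable ℝ φ) (v : E)
    (hint : Integrable (fun x => ⟪v, x⟫ * φ x * exp (-a * ‖x‖ ^ 2)) μ)
    (hint_deriv : Integrable (fun x => fderiv ℝ φ x v * exp (-a * ‖x‖ ^ 2)) μ)
    (hint_φ : Integrable (fun x => φ x * exp (-a * ‖x‖ ^ 2)) μ) :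
    ∫ x, ⟪v, x⟫ * φ x * exp (-a * ‖x‖ ^ 2) ∂μ =
      (2 * a)⁻¹ * ∫ x, fderiv ℝ φ x v * exp (-a * ‖x‖ ^ 2) ∂μ := by
  have hderiv (x : E) : fderiv ℝ (fun x : E => exp (-a * ‖x‖ ^ 2)) x v =
      -2 * a * (⟪v, x⟫ * exp (-a * ‖x‖ ^ 2)) := by
    rw [(hasFDerivAt_exp_neg_mul_sq_norm a x).fderiv]
    simp only [FunLike.coe_smul, Pi.smul_apply, innerSL_apply_apply, smul_eq_mul,
      real_inner_comm x]
    ring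
  have hrearrange (x : E) : φ x * fderiv ℝ (fun x : E => exp (-a * ‖x‖ ^ 2)) x v =
      -2 * a * (⟪v, x⟫ * φ x * exp (-a * ‖x‖ ^ 2)) := by
    rw [hderiv]; ring
  have hint_mul :
      Integrable (fun x => φ x * fderiv ℝ (fun x : E => exp (-a * ‖x‖ ^ 2)) x v) μ := by
    simpa only [hrearrange] using hint.const_mul (-2 * a)
  have hparts := integral_mul_fderiv_eq_neg_fderiv_mul_of_integrable hint_deriv hint_mul hint_φ
    (fun x _ => hφ x) (fun x _ => (hasFDerivAt_exp_neg_mul_sq_norm a x).differentiableAt)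
  simp only [hrearrange, integral_const_mul] at hparts
  rw [eq_inv_mul_iff_mul_eq₀ (mul_ne_zero two_ne_zero ha)]
  linear_combination -hparts

theorem integrable_exp_neg_mul_sq_norm [Nontrivial E] {a : ℝ} (ha : 0 < a) :
    Integrable (fun x : E => exp (-a * ‖x‖ ^ 2)) μ := by
  simpa using integrable_norm_pow_mul_exp_neg_mul_sq_norm μ ha 0

theorem integrable_inner_mul_inner_mul_exp_neg_mul_sq_norm [Nontrivial E] {a : ℝ} (ha : 0 < a)
    (u v : E) : Integrable (fun x => ⟪v, x⟫ * ⟪u, x⟫ * exp (-a * ‖x‖ ^ 2)) μ := by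
  refine integrable_of_abs_le_norm_pow_mul_exp_neg_mul_sq_norm μ ha (by fun_prop) (‖v‖ * ‖u‖) 2
    fun x => ?_
  rw [abs_mul, abs_mul, abs_exp]
  calc |⟪v, x⟫| * |⟪u, x⟫| * exp (-a * ‖x‖ ^ 2)
      ≤ ‖v‖ * ‖x‖ * (‖u‖ * ‖x‖) * exp (-a * ‖x‖ ^ 2) := by
        gcongr <;> exact abs_real_inner_le_norm _ _
    _ = ‖v‖ * ‖u‖ * (‖x‖ ^ 2 * exp (-a * ‖x‖ ^ 2)) := by ring

theorem integrable_inner_sq_mul_exp_neg_mul_sq_norm [Nontrivial E] {a : ℝ} (ha : 0 < a) (u : E) :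
    Integrable (fun x => ⟪u, x⟫ ^ 2 * exp (-a * ‖x‖ ^ 2)) μ := by
  simpa only [← sq] using integrable_inner_mul_inner_mul_exp_neg_mul_sq_norm μ ha u u

theorem integrable_inner_sq_mul_norm_sq_mul_exp_neg_mul_sq_norm [Nontrivial E] {a : ℝ} (ha : 0 < a)
    (u : E) : Integrable (fun x => ⟪u, x⟫ ^ 2 * ‖x‖ ^ 2 * exp (-a * ‖x‖ ^ 2)) μ := by
  refine integrable_of_abs_le_norm_pow_mul_exp_neg_mul_sq_norm μ ha (by fun_prop) (‖u‖ ^ 2) 4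
    fun x => ?_
  rw [abs_mul, abs_mul, abs_exp, abs_pow, abs_of_nonneg (by positivity : (0 : ℝ) ≤ ‖x‖ ^ 2)]
  calc |⟪u, x⟫| ^ 2 * ‖x‖ ^ 2 * exp (-a * ‖x‖ ^ 2)
      ≤ (‖u‖ * ‖x‖) ^ 2 * ‖x‖ ^ 2 * exp (-a * ‖x‖ ^ 2) := by
        gcongr; exact abs_real_inner_le_norm u x
    _ = ‖u‖ ^ 2 * (‖x‖ ^ 4 * exp (-a * ‖x‖ ^ 2)) := by ring

theorem integral_inner_mul_inner_mul_exp_neg_mul_sq_norm [Nontrivial E] {a : ℝ} (ha : 0 < a)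
    (u v : E) :
    ∫ x, ⟪v, x⟫ * ⟪u, x⟫ * exp (-a * ‖x‖ ^ 2) ∂μ =
      ⟪u, v⟫ / (2 * a) * ∫ x, exp (-a * ‖x‖ ^ 2) ∂μ := by
  have hderiv (x : E) : HasFDerivAt (fun x : E => ⟪u, x⟫) (innerSL ℝ u) x :=
    (innerSL ℝ u).hasFDerivAt
  have hint : Integrable (fun x => ⟪u, x⟫ * exp (-a * ‖x‖ ^ 2)) μ := by
    refine integrable_of_abs_le_norm_pow_mul_exp_neg_mul_sq_norm μ ha (by fun_prop) ‖u‖ 1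
      fun x => ?_
    rw [abs_mul, abs_exp, pow_one, ← mul_assoc]
    gcongr
    exact abs_real_inner_le_norm _ _
  rw [integral_inner_mul_mul_exp_neg_mul_sq_norm μ ha.ne' (fun x => (hderiv x).differentiableAt) v
    (integrable_inner_mul_inner_mul_exp_neg_mul_sq_norm μ ha u v) ?_ hint]
  · simp only [(hderiv _).fderiv, innerSL_apply_apply, integral_const_mul]
    ring
  · simpa only [(hderiv _).fderiv, innerSL_apply_apply] using
      (integrable_exp_neg_mul_sq_norm μ ha).const_mul ⟪u, v⟫

theorem integral_inner_sq_mul_exp_neg_mul_sq_norm [Nontrivial E] {a : ℝ} (ha : 0 < a) (u : E) :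
    ∫ x, ⟪u, x⟫ ^ 2 * exp (-a * ‖x‖ ^ 2) ∂μ = ‖u‖ ^ 2 / (2 * a) * ∫ x, exp (-a * ‖x‖ ^ 2) ∂μ := by
  simpa only [← sq, real_inner_self_eq_norm_sq] using
    integral_inner_mul_inner_mul_exp_neg_mul_sq_norm μ ha u u

theorem integral_norm_sq_mul_exp_neg_mul_sq_norm [Nontrivial E] {a : ℝ} (ha : 0 < a) :
    ∫ x, ‖x‖ ^ 2 * exp (-a * ‖x‖ ^ 2) ∂μ = finrank ℝ E / (2 * a) * ∫ x, exp (-a * ‖x‖ ^ 2) ∂μ := by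
  let e := stdOrthonormalBasis ℝ E
  have hsum (x : E) : ‖x‖ ^ 2 * exp (-a * ‖x‖ ^ 2) =
      ∑ i, ⟪e i, x⟫ * ⟪e i, x⟫ * exp (-a * ‖x‖ ^ 2) := by
    rw [← Finset.sum_mul, ← real_inner_self_eq_norm_sq, ← e.sum_inner_mul_inner x x]
    simp only [real_inner_comm x]
  simp_rw [hsum]
  rw [integral_finsetSum _ fun i _ => integrable_inner_mul_inner_mul_exp_neg_mul_sq_norm μ ha _ _]
  simp_rw [integral_inner_mul_inner_mul_exp_neg_mul_sq_norm μ ha, real_inner_self_eq_norm_sq,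
    e.orthonormal.1, Finset.sum_const, Finset.card_univ, Fintype.card_fin, nsmul_eq_mul]
  ring

theorem integral_inner_sq_mul_norm_sq_mul_exp_neg_mul_sq_norm [Nontrivial E] {a : ℝ} (ha : 0 < a)
    (u : E) :
    ∫ x, ⟪u, x⟫ ^ 2 * ‖x‖ ^ 2 * exp (-a * ‖x‖ ^ 2) ∂μ =
      (finrank ℝ E + 2) / (2 * a) * ∫ x, ⟪u, x⟫ ^ 2 * exp (-a * ‖x‖ ^ 2) ∂μ := by
  have hderiv (x : E) : HasFDerivAt (fun x : E => ⟪u, x⟫ * ‖x‖ ^ 2)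
      (⟪u, x⟫ • (2 • innerSL ℝ x) + ‖x‖ ^ 2 • innerSL ℝ u) x :=
    (innerSL ℝ u).hasFDerivAt.mul (hasStrictFDerivAt_norm_sq x).hasFDerivAt
  have hfderiv (x : E) : fderiv ℝ (fun x : E => ⟪u, x⟫ * ‖x‖ ^ 2) x u * exp (-a * ‖x‖ ^ 2) =
      2 * (⟪u, x⟫ ^ 2 * exp (-a * ‖x‖ ^ 2)) + ‖u‖ ^ 2 * (‖x‖ ^ 2 * exp (-a * ‖x‖ ^ 2)) := by
    simp only [(hderiv x).fderiv, real_inner_comm x, add_apply, smul_apply, coe_innerSL_apply,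
      nsmul_eq_mul, Nat.cast_ofNat, smul_eq_mul, real_inner_self_eq_norm_sq]
    ring
  have hint_sq := integrable_inner_sq_mul_exp_neg_mul_sq_norm μ ha u
  have hint_norm := integrable_norm_pow_mul_exp_neg_mul_sq_norm μ ha 2
  have hint : Integrable (fun x => ⟪u, x⟫ * (⟪u, x⟫ * ‖x‖ ^ 2) * exp (-a * ‖x‖ ^ 2)) μ := by
    simpa only [← mul_assoc, ← sq] using
      integrable_inner_sq_mul_norm_sq_mul_exp_neg_mul_sq_norm μ ha u
  have hint_φ : Integrable (fun x => ⟪u, x⟫ * ‖x‖ ^ 2 * exp (-a * ‖x‖ ^ 2)) μ := by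
    refine integrable_of_abs_le_norm_pow_mul_exp_neg_mul_sq_norm μ ha (by fun_prop) ‖u‖ 3
      fun x => ?_
    rw [abs_mul, abs_mul, abs_exp, abs_of_nonneg (by positivity : (0 : ℝ) ≤ ‖x‖ ^ 2)]
    calc |⟪u, x⟫| * ‖x‖ ^ 2 * exp (-a * ‖x‖ ^ 2)
        ≤ ‖u‖ * ‖x‖ * ‖x‖ ^ 2 * exp (-a * ‖x‖ ^ 2) := by
          gcongr; exact abs_real_inner_le_norm u x
      _ = ‖u‖ * (‖x‖ ^ 3 * exp (-a * ‖x‖ ^ 2)) := by ring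
  have hparts := integral_inner_mul_mul_exp_neg_mul_sq_norm μ ha.ne'
    (fun x => (hderiv x).differentiableAt) u hint
    (by simp_rw [hfderiv]; exact (hint_sq.const_mul 2).add (hint_norm.const_mul _)) hint_φ
  simp only [hfderiv] at hparts
  rw [integral_add (hint_sq.const_mul 2) (hint_norm.const_mul _), integral_const_mul,
    integral_const_mul, integral_norm_sq_mul_exp_neg_mul_sq_norm μ ha] at hparts
  simp only [← mul_assoc, ← sq] at hparts
  rw [hparts, integral_inner_sq_mul_exp_neg_mul_sq_norm μ ha u]
  ring

theorem integral_sq_inner_mul_exp_neg_mul_sq_norm_mul_norm_sq [Nontrivial E] {c : ℝ}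
    (hc : 0 < c) (u : E) :
    ∫ x, (⟪u, x⟫ * exp (-c * ‖x‖ ^ 2)) ^ 2 * ‖x‖ ^ 2 ∂μ =
      (finrank ℝ E + 2) / (4 * c) * ∫ x, (⟪u, x⟫ * exp (-c * ‖x‖ ^ 2)) ^ 2 ∂μ := by
  simp_rw [mul_pow, sq_exp_neg_mul, mul_right_comm _ (exp _)]
  rw [integral_inner_sq_mul_norm_sq_mul_exp_neg_mul_sq_norm μ (by positivity)]
  ring

theorem integral_norm_sq_gradient_inner_mul_exp_neg_mul_sq_norm [Nontrivial E] {c : ℝ}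
    (hc : 0 < c) (u : E) :
    ∫ x, ‖exp (-c * ‖x‖ ^ 2) • (u - (2 * c * ⟪u, x⟫) • x)‖ ^ 2 ∂μ =
      c * (finrank ℝ E + 2) * ∫ x, (⟪u, x⟫ * exp (-c * ‖x‖ ^ 2)) ^ 2 ∂μ := by
  have hpt (x : E) : ‖exp (-c * ‖x‖ ^ 2) • (u - (2 * c * ⟪u, x⟫) • x)‖ ^ 2 =
      ‖u‖ ^ 2 * exp (-(2 * c) * ‖x‖ ^ 2) - 4 * c * (⟪u, x⟫ ^ 2 * exp (-(2 * c) * ‖x‖ ^ 2)) +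
        4 * c ^ 2 * (⟪u, x⟫ ^ 2 * ‖x‖ ^ 2 * exp (-(2 * c) * ‖x‖ ^ 2)) := by
    rw [norm_smul, mul_pow, norm_sub_sq_real, norm_smul, inner_smul_right, mul_pow,
      Real.norm_eq_abs, Real.norm_eq_abs, sq_abs, sq_abs, sq_exp_neg_mul]
    ring
  have h2c : 0 < 2 * c := by positivity
  simp_rw [hpt, mul_pow, sq_exp_neg_mul]
  have hint_quad := integrable_inner_sq_mul_exp_neg_mul_sq_norm μ h2c u
  have hint_diff : Integrable (fun x => ‖u‖ ^ 2 * exp (-(2 * c) * ‖x‖ ^ 2) -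
      4 * c * (⟪u, x⟫ ^ 2 * exp (-(2 * c) * ‖x‖ ^ 2))) μ :=
    ((integrable_exp_neg_mul_sq_norm μ h2c).const_mul _).sub (hint_quad.const_mul _)
  rw [integral_add hint_diff
      ((integrable_inner_sq_mul_norm_sq_mul_exp_neg_mul_sq_norm μ h2c u).const_mul _),
    integral_sub ((integrable_exp_neg_mul_sq_norm μ h2c).const_mul _) (hint_quad.const_mul _),
    integral_const_mul, integral_const_mul, integral_const_mul,
    integral_inner_sq_mul_norm_sq_mul_exp_neg_mul_sq_norm μ h2c,
    integral_inner_sq_mul_exp_neg_mul_sq_norm μ h2c]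
  field_simp
  ring

end GaussianMoments

theorem gradSqS_eq_norm_sq_of_hasFDerivAt {N : ℕ} {g : EuclideanSpace ℝ (Fin N) → ℝ}
    {x y : EuclideanSpace ℝ (Fin N)} (h : HasFDerivAt g (innerSL ℝ y) x) :
    gradSqS g x = ‖y‖ ^ 2 := by
  simp [gradSqS, h.fderiv, EuclideanSpace.inner_single_right, EuclideanSpace.real_norm_sq_eq]

/-- The function `f(x) = (Σ_k B_k x_k) e^{-B₀|x|²}` has zero spherical mean on every
sphere and attains equality in the uncertainty principle inequality with constant
`((N+2)/2)²`. -/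
theorem stmt_7 (N : ℕ) (hN : 3 ≤ N) (B₀ : ℝ) (hB₀ : 0 < B₀) (B : Fin N → ℝ)
    (f : EuclideanSpace ℝ (Fin N) → ℝ)
    (hf : f = fun x => (∑ k, B k * x k) * Real.exp (-B₀ * ‖x‖ ^ 2)) :
    (∀ r : ℝ, 0 < r →
      (∫ σ : sphere (0 : EuclideanSpace ℝ (Fin N)) 1,
        f (r • (σ : EuclideanSpace ℝ (Fin N))) ∂(sphereMeasure N)) = 0) ∧
    (∫ x, gradSqS f x) * (∫ x, (f x) ^ 2 * ‖x‖ ^ 2) =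
      (((N : ℝ) + 2) / 2) ^ 2 * (∫ x, (f x) ^ 2) ^ 2 := by
  have : Nontrivial (EuclideanSpace ℝ (Fin N)) :=
    nontrivial_of_finrank_pos (R := ℝ) (by rw [finrank_euclideanSpace_fin]; omega)
  set b : EuclideanSpace ℝ (Fin N) := WithLp.toLp 2 B
  replace hf : f = fun x => ⟪b, x⟫ * exp (-B₀ * ‖x‖ ^ 2) := by
    funext x
    rw [hf]
    simp [b, PiLp.inner_apply, mul_comm]
  subst hf
  refine ⟨fun r _ => ?_, ?_⟩
  · rw [sphereMeasure]
    exact integral_eq_zero_of_odd _ fun σ => by simp [coe_neg_sphere, smul_neg, inner_neg_right]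
  have hgrad (x : EuclideanSpace ℝ (Fin N)) :
      gradSqS (fun x => ⟪b, x⟫ * exp (-B₀ * ‖x‖ ^ 2)) x =
        ‖exp (-B₀ * ‖x‖ ^ 2) • (b - (2 * B₀ * ⟪b, x⟫) • x)‖ ^ 2 :=
    gradSqS_eq_norm_sq_of_hasFDerivAt (hasFDerivAt_inner_mul_exp_neg_mul_sq_norm B₀ b x)
  simp_rw [hgrad]
  rw [integral_norm_sq_gradient_inner_mul_exp_neg_mul_sq_norm volume hB₀,
    integral_sq_inner_mul_exp_neg_mul_sq_norm_mul_norm_sq volume hB₀, finrank_euclideanSpace_fin]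
  field_simp
  ring
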